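/- Let ρ be an irreducible real Clifford module structure on a vector space S over ℝⁿ with orthonormal basis {e^j}, cl a Clifford action on a space Ω, with the compatibility ρ(ξ)γ(a) = −γ(cl(ξ)a) for all ξ, a. Define μ(φ, ψ) = Σ_{α,j} ⟨γ(e^j t_α)φ, ψ⟩ e^j t_α (with skew-adjoint γ(e^j t_α) as appropriate). Then for every unit covector ξ: cl(ξ) μ(φ, ψ) = −μ(ρ(ξ)φ, ψ), i.e., the moment map polarization intertwines the two Clifford actions with a sign. -/
import Mathlib


open RealInnerProductSpace

/-- if `ρ`, `cl` are skew-adjoint Clifford actions on `S`, `Ω`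
satisfying the compatibility `ρ(ξ)γ(a) = -γ(cl(ξ)a)` with self-adjoint
`γ(b i)`, and `μ(φ,ψ) = Σ_i ⟨γ(b i)φ, ψ⟩ b i` for an orthonormal basis `b` of
`Ω`, then `cl(ξ)μ(φ,ψ) = -μ(ρ(ξ)φ, ψ)` for every unit covector `ξ`. -/
theorem stmt_8 {n : ℕ} {S Ω : Type*}
    [NormedAddCommGroup S] [InnerProductSpace ℝ S] [FiniteDimensional ℝ S]
    [NormedAddCommGroup Ω] [InnerProductSpace ℝ Ω] [FiniteDimensional ℝ Ω]
    {ι : Type*} [Fintype ι]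
    (ρ : EuclideanSpace ℝ (Fin n) →ₗ[ℝ] (S →ₗ[ℝ] S))
    (cl : EuclideanSpace ℝ (Fin n) →ₗ[ℝ] (Ω →ₗ[ℝ] Ω))
    (γ : Ω →ₗ[ℝ] (S →ₗ[ℝ] S))
    (b : OrthonormalBasis ι ℝ Ω)
    (hρcliff : ∀ ξ η : EuclideanSpace ℝ (Fin n),
      ρ ξ ∘ₗ ρ η + ρ η ∘ₗ ρ ξ = -(2 * ⟪ξ, η⟫) • (LinearMap.id : S →ₗ[ℝ] S))
    (hclcliff : ∀ ξ η : EuclideanSpace ℝ (Fin n),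
      cl ξ ∘ₗ cl η + cl η ∘ₗ cl ξ = -(2 * ⟪ξ, η⟫) • (LinearMap.id : Ω →ₗ[ℝ] Ω))
    (hρskew : ∀ ξ (x y : S), ⟪ρ ξ x, y⟫ = -⟪x, ρ ξ y⟫)
    (hclskew : ∀ ξ (a c : Ω), ⟪cl ξ a, c⟫ = -⟪a, cl ξ c⟫)
    (hγself : ∀ (a : Ω) (x y : S), ⟪γ a x, y⟫ = ⟪x, γ a y⟫)
    (hcompat : ∀ ξ (a : Ω), ρ ξ ∘ₗ γ a = -γ (cl ξ a)) :
    ∀ ξ : EuclideanSpace ℝ (Fin n), ‖ξ‖ = 1 → ∀ φ ψ : S,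
      cl ξ (∑ i, ⟪γ (b i) φ, ψ⟫ • b i) = -∑ i, ⟪γ (b i) (ρ ξ φ), ψ⟫ • b i := by
  intro ξ hξ φ ψ
  -- rewrite the coefficients on the RHS
  have hcoef : ∀ i, ⟪γ (b i) (ρ ξ φ), ψ⟫ = ⟪γ (cl ξ (b i)) φ, ψ⟫ := by
    intro i
    have h1 : ρ ξ (γ (b i) ψ) = -(γ (cl ξ (b i)) ψ) := by
      have := congrArg (fun f => f ψ) (hcompat ξ (b i))
      simpa using this
    calc ⟪γ (b i) (ρ ξ φ), ψ⟫ = ⟪ρ ξ φ, γ (b i) ψ⟫ := hγself _ _ _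
      _ = -⟪φ, ρ ξ (γ (b i) ψ)⟫ := hρskew _ _ _
      _ = -⟪φ, -(γ (cl ξ (b i)) ψ)⟫ := by rw [h1]
      _ = ⟪φ, γ (cl ξ (b i)) ψ⟫ := by rw [inner_neg_right]; ring
      _ = ⟪γ (cl ξ (b i)) φ, ψ⟫ := (hγself _ _ _).symm
  simp only [hcoef]
  have hsum : ∀ i, cl ξ (b i) = ∑ k, ⟪b k, cl ξ (b i)⟫ • b k := fun i =>
    (b.sum_repr' (cl ξ (b i))).symm
  have hγsum : ∀ i, ⟪γ (cl ξ (b i)) φ, ψ⟫ = ∑ k, ⟪b k, cl ξ (b i)⟫ * ⟪γ (b k) φ, ψ⟫ := by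
    intro i
    conv_lhs => rw [hsum i]
    simp [inner_smul_left, LinearMap.sum_apply, sum_inner]
  calc cl ξ (∑ i, ⟪γ (b i) φ, ψ⟫ • b i)
      = ∑ i, ⟪γ (b i) φ, ψ⟫ • cl ξ (b i) := by simp [map_sum, map_smul]
    _ = ∑ i, ∑ k, (⟪γ (b i) φ, ψ⟫ * ⟪b k, cl ξ (b i)⟫) • b k := by
        refine Finset.sum_congr rfl fun i _ => ?_
        conv_lhs => rw [hsum i]
        rw [Finset.smul_sum]
        simp [smul_smul]
    _ = ∑ k, ∑ i, (⟪γ (b i) φ, ψ⟫ * ⟪b k, cl ξ (b i)⟫) • b k := Finset.sum_comm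
    _ = -∑ k, ⟪γ (cl ξ (b k)) φ, ψ⟫ • b k := by
        rw [← Finset.sum_neg_distrib]
        refine Finset.sum_congr rfl fun k _ => ?_
        rw [hγsum k, ← Finset.sum_smul, ← neg_smul, ← Finset.sum_neg_distrib]
        refine congrArg (· • b k) (Finset.sum_congr rfl fun i _ => ?_)
        have h := hclskew ξ (b i) (b k)
        have h2 : ⟪b k, cl ξ (b i)⟫ = -⟪b i, cl ξ (b k)⟫ := (real_inner_comm _ _).trans h
        rw [h2]; ring
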